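/- arXiv:2405.17943 — 2 statements merged into one kernel-verified Lean document; each statement's English description precedes it below -/
import Mathlib

section
/- Let F be a bounded self-adjoint operator on a complex Hilbert space H and 0 < A ≤ B real numbers with A‖f‖² ≤ ⟨F f, f⟩ ≤ B‖f‖² for all f ∈ H. Then F is bijective and its inverse satisfies B⁻¹‖f‖² ≤ ⟨F⁻¹ f, f⟩ ≤ A⁻¹‖f‖² for all f ∈ H. -/
open scoped InnerProductSpace ComplexOrder

/-- If `F` is a bounded self-adjoint operator on a complex Hilbert space `H`
and `0 < A ≤ B` are reals with `A‖f‖² ≤ ⟨F f, f⟩ ≤ B‖f‖²` for all `f` (complex order;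
`⟨F f, f⟩ = ⟪f, F f⟫_ℂ` in Mathlib's convention), then `F` is bijective and its (bounded)
inverse `G` satisfies `B⁻¹‖f‖² ≤ ⟨G f, f⟩ ≤ A⁻¹‖f‖²` for all `f`. -/
theorem stmt3 {H : Type*} [NormedAddCommGroup H] [InnerProductSpace ℂ H] [CompleteSpace H]
    (F : H →L[ℂ] H) (hsa : IsSelfAdjoint F) (A B : ℝ) (hA : 0 < A) (hAB : A ≤ B)
    (hbd : ∀ f : H, ((A * ‖f‖ ^ 2 : ℝ) : ℂ) ≤ ⟪f, F f⟫_ℂ ∧ ⟪f, F f⟫_ℂ ≤ ((B * ‖f‖ ^ 2 : ℝ) : ℂ)) :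
    Function.Bijective F ∧
    ∃ G : H →L[ℂ] H, (∀ f : H, G (F f) = f ∧ F (G f) = f) ∧
      ∀ f : H, ((B⁻¹ * ‖f‖ ^ 2 : ℝ) : ℂ) ≤ ⟪f, G f⟫_ℂ ∧
        ⟪f, G f⟫_ℂ ≤ ((A⁻¹ * ‖f‖ ^ 2 : ℝ) : ℂ) := by
  have hre_norm : ∀ z : ℂ, z.re ≤ ‖z‖ := fun z => by
    exact Complex.re_le_norm z
  -- Extract real-part bounds and vanishing imaginary part.
  have him : ∀ f : H, ⟪f, F f⟫_ℂ = ((⟪f, F f⟫_ℂ).re : ℂ) := by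
    intro f
    have h1 := (hbd f).1
    rw [Complex.le_def] at h1
    have h2 : (⟪f, F f⟫_ℂ).im = 0 := by rw [← h1.2]; exact Complex.ofReal_im _
    exact Complex.ext (by simp) (by simp [h2])
  have hlb : ∀ f : H, A * ‖f‖ ^ 2 ≤ (⟪f, F f⟫_ℂ).re := by
    intro f
    have h1 := (hbd f).1
    rw [Complex.le_def] at h1
    have := h1.1
    simpa only [Complex.ofReal_re] using this
  have hub : ∀ f : H, (⟪f, F f⟫_ℂ).re ≤ B * ‖f‖ ^ 2 := by
    intro f
    have h1 := (hbd f).2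
    rw [Complex.le_def] at h1
    have := h1.1
    simpa only [Complex.ofReal_re] using this
  have hsym : ∀ x y : H, ⟪F x, y⟫_ℂ = ⟪x, F y⟫_ℂ := by
    intro x y
    conv_lhs => rw [← hsa.adjoint_eq]
    exact ContinuousLinearMap.adjoint_inner_left F y x
  -- F is a unit.
  have hunit : IsUnit F := by
    refine ContinuousLinearMap.isUnit_of_forall_le_norm_inner_map F (c := ⟨A, hA.le⟩)
      (by exact_mod_cast hA) fun x => ?_
    have h1 : A * ‖x‖ ^ 2 ≤ (⟪x, F x⟫_ℂ).re := hlb x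
    have h2 : (⟪x, F x⟫_ℂ).re ≤ ‖⟪x, F x⟫_ℂ‖ := hre_norm _
    have h3 : ‖⟪F x, x⟫_ℂ‖ = ‖⟪x, F x⟫_ℂ‖ := norm_inner_symm _ _
    calc ‖x‖ ^ 2 * ((⟨A, hA.le⟩ : NNReal) : ℝ) = A * ‖x‖ ^ 2 := by
          simp [mul_comm]
      _ ≤ ‖⟪F x, x⟫_ℂ‖ := by rw [h3]; exact h1.trans h2
  obtain ⟨u, hu⟩ := hunit
  set G : H →L[ℂ] H := (↑u⁻¹ : H →L[ℂ] H) with hG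
  have hGF : ∀ f : H, G (F f) = f := by
    intro f
    have h : ((↑u⁻¹ : H →L[ℂ] H) * ↑u) f = (1 : H →L[ℂ] H) f := by rw [u.inv_mul]
    simpa [hu, ContinuousLinearMap.mul_apply] using h
  have hFG : ∀ f : H, F (G f) = f := by
    intro f
    have h : ((↑u : H →L[ℂ] H) * ↑u⁻¹) f = (1 : H →L[ℂ] H) f := by rw [u.mul_inv]
    simpa [hu, ContinuousLinearMap.mul_apply] using h
  refine ⟨Function.bijective_iff_has_inverse.mpr ⟨G, hGF, hFG⟩, G, fun f => ⟨hGF f, hFG f⟩, ?_⟩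
  intro f
  set g : H := G f with hgdef
  have hFg : F g = f := hFG f
  set r : ℝ := (⟪g, F g⟫_ℂ).re with hr
  set b : ℝ := (⟪f, F f⟫_ℂ).re with hb
  -- ⟪f, G f⟫ = r as a real number
  have hfGf : ⟪f, g⟫_ℂ = (r : ℂ) := by
    calc ⟪f, g⟫_ℂ = ⟪F g, g⟫_ℂ := by rw [hFg]
      _ = ⟪g, F g⟫_ℂ := hsym g g
      _ = (r : ℂ) := him g
  have hgFf : ⟪g, F f⟫_ℂ = ((‖f‖ ^ 2 : ℝ) : ℂ) := by
    rw [← hsym g f, hFg, inner_self_eq_norm_sq_to_K]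
    norm_cast
  have hfFg : ⟪f, F g⟫_ℂ = ((‖f‖ ^ 2 : ℝ) : ℂ) := by
    rw [hFg, inner_self_eq_norm_sq_to_K]
    norm_cast
  have hbf : ⟪f, F f⟫_ℂ = (b : ℂ) := him f
  have hrg : ⟪g, F g⟫_ℂ = (r : ℂ) := him g
  -- key quadratic inequality
  have key : ∀ t : ℝ, 0 ≤ r * (t * t) + 2 * ‖f‖ ^ 2 * t + b := by
    intro t
    have h0 : (0 : ℝ) ≤ A * ‖f + (t : ℂ) • g‖ ^ 2 := by positivity
    have h1 := h0.trans (hlb (f + (t : ℂ) • g))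
    have hexp : ⟪f + (t : ℂ) • g, F (f + (t : ℂ) • g)⟫_ℂ
        = ((r * (t * t) + 2 * ‖f‖ ^ 2 * t + b : ℝ) : ℂ) := by
      simp only [map_add, map_smul, inner_add_left, inner_add_right, inner_smul_left,
        inner_smul_right, hgFf, hfFg, hbf, hrg, Complex.conj_ofReal]
      push_cast
      ring
    rw [hexp] at h1
    simpa only [Complex.ofReal_re] using h1
  have hrlbA : A * ‖g‖ ^ 2 ≤ r := hlb g
  have hr0 : 0 ≤ r := le_trans (by positivity) hrlbA
  have hbub : b ≤ B * ‖f‖ ^ 2 := hub f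
  have hB : (0 : ℝ) < B := lt_of_lt_of_le hA hAB
  -- Cauchy–Schwarz-type bound ‖f‖⁴ ≤ r * b from the discriminant
  have hd := discrim_le_zero key
  rw [discrim] at hd
  have h4 : ‖f‖ ^ 2 * ‖f‖ ^ 2 ≤ r * b := by nlinarith [hd]
  constructor
  · -- lower bound B⁻¹‖f‖² ≤ r
    rw [hfGf, Complex.real_le_real]
    by_cases hf : f = 0
    · simp [hf, hr0]
    · have hfn : (0 : ℝ) < ‖f‖ ^ 2 := pow_pos (norm_pos_iff.mpr hf) 2
      have h5 : ‖f‖ ^ 2 ≤ B * r := by nlinarith [h4, hbub, hr0, hfn]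
      calc B⁻¹ * ‖f‖ ^ 2 ≤ B⁻¹ * (B * r) := by
            apply mul_le_mul_of_nonneg_left h5 (by positivity)
        _ = r := by field_simp
  · -- upper bound r ≤ A⁻¹‖f‖²
    rw [hfGf, Complex.real_le_real]
    have hcs : r ≤ ‖g‖ * ‖f‖ := by
      have h1 : r ≤ ‖⟪g, F g⟫_ℂ‖ := hre_norm _
      calc r ≤ ‖⟪g, F g⟫_ℂ‖ := h1
        _ ≤ ‖g‖ * ‖F g‖ := norm_inner_le_norm _ _
        _ = ‖g‖ * ‖f‖ := by rw [hFg]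
    by_cases hg : g = 0
    · have : r = 0 := by rw [hr, hgdef] at *; rw [hg]; simp
      rw [this]
      positivity
    · have hgpos : (0 : ℝ) < ‖g‖ := norm_pos_iff.mpr hg
      have h5 : A * r ≤ ‖f‖ ^ 2 := by
        nlinarith [mul_le_mul_of_nonneg_left hcs hA.le,
          mul_le_mul_of_nonneg_right (hrlbA.trans hcs) (norm_nonneg f), hgpos,
          sq_nonneg (‖f‖ - A * ‖g‖)]
      calc r = A⁻¹ * (A * r) := by field_simp
        _ ≤ A⁻¹ * ‖f‖ ^ 2 := mul_le_mul_of_nonneg_left h5 (by positivity)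
end

section
/- Let H be a complex Hilbert space and (f_j)_{j∈J} a frame for H with bounds 0 < A ≤ B, with frame operator F. Then the family (F⁻¹ f_j)_{j∈J} is a frame for H with bounds B⁻¹ ≤ A⁻¹, i.e. B⁻¹‖f‖² ≤ ∑_{j∈J} |⟨f, F⁻¹ f_j⟩|² ≤ A⁻¹‖f‖² for all f ∈ H. -/
open scoped InnerProductSpace ComplexConjugate

/-- Let `(v j)ⱼ` be a frame for `H` with bounds `0 < A ≤ B`, frame operator
`F f = ∑ⱼ ⟨f, vⱼ⟩ vⱼ` (with `⟨f, g⟩ = ⟪g, f⟫_ℂ`, linear in `f`), and let `G` be the (bounded)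
inverse of `F`. Then `(F⁻¹ vⱼ)ⱼ = (G vⱼ)ⱼ` is a frame for `H` with bounds `B⁻¹ ≤ A⁻¹`:
`B⁻¹‖f‖² ≤ ∑ⱼ |⟨f, F⁻¹ vⱼ⟩|² ≤ A⁻¹‖f‖²` for all `f ∈ H`. -/
theorem stmt5 {H : Type*} [NormedAddCommGroup H] [InnerProductSpace ℂ H] [CompleteSpace H]
    {J : Type*} [Countable J] (v : J → H) (A B : ℝ) (hA : 0 < A) (hAB : A ≤ B)
    (hframe : ∀ f : H, Summable (fun j => ‖⟪v j, f⟫_ℂ‖ ^ 2) ∧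
      A * ‖f‖ ^ 2 ≤ ∑' j, ‖⟪v j, f⟫_ℂ‖ ^ 2 ∧ ∑' j, ‖⟪v j, f⟫_ℂ‖ ^ 2 ≤ B * ‖f‖ ^ 2)
    (F : H →L[ℂ] H) (hF : ∀ f : H, HasSum (fun j => ⟪v j, f⟫_ℂ • v j) (F f))
    (G : H →L[ℂ] H) (hG : ∀ f : H, G (F f) = f ∧ F (G f) = f) :
    ∀ f : H, Summable (fun j => ‖⟪G (v j), f⟫_ℂ‖ ^ 2) ∧
      B⁻¹ * ‖f‖ ^ 2 ≤ ∑' j, ‖⟪G (v j), f⟫_ℂ‖ ^ 2 ∧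
      ∑' j, ‖⟪G (v j), f⟫_ℂ‖ ^ 2 ≤ A⁻¹ * ‖f‖ ^ 2 := by
  have hB : 0 < B := hA.trans_le hAB
  -- F is self-adjoint
  have hFadj : ∀ x y : H, ⟪F x, y⟫_ℂ = ⟪x, F y⟫_ℂ := by
    intro x y
    have h1 : HasSum (fun j => ⟪v j, x⟫_ℂ * ⟪y, v j⟫_ℂ) ⟪y, F x⟫_ℂ := by
      simpa [inner_smul_right] using (hF x).mapL (innerSL ℂ y)
    have h2 : HasSum (fun j => ⟪v j, y⟫_ℂ * ⟪x, v j⟫_ℂ) ⟪x, F y⟫_ℂ := by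
      simpa [inner_smul_right] using (hF y).mapL (innerSL ℂ x)
    have h1' : HasSum (fun j => ⟪v j, y⟫_ℂ * ⟪x, v j⟫_ℂ) (conj ⟪y, F x⟫_ℂ) := by
      have := h1.mapL (Complex.conjCLE.toContinuousLinearMap)
      simpa [mul_comm, inner_conj_symm] using this
    rw [← inner_conj_symm (F x) y]
    exact (h1'.unique h2) ▸ rfl
  -- G is self-adjoint
  have hGadj : ∀ x y : H, ⟪G x, y⟫_ℂ = ⟪x, G y⟫_ℂ := by
    intro x y
    have := hFadj (G x) (G y)
    rw [(hG x).2, (hG y).2] at this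
    exact this.symm
  intro f
  set g : H := G f with hg
  have hFg : F g = f := (hG f).2
  -- the goal's coefficients equal ⟪v j, g⟫
  have hcoef : ∀ j, ⟪G (v j), f⟫_ℂ = ⟪v j, g⟫_ℂ := fun j => hGadj (v j) f
  have hfun : (fun j => ‖⟪G (v j), f⟫_ℂ‖ ^ 2) = fun j => ‖⟪v j, g⟫_ℂ‖ ^ 2 := by
    funext j; rw [hcoef j]
  obtain ⟨hSummg, hLg, hUg⟩ := hframe g
  obtain ⟨hSummf, hLf, hUf⟩ := hframe f
  set S : ℝ := ∑' j, ‖⟪v j, g⟫_ℂ‖ ^ 2 with hSdef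
  set T : ℝ := ∑' j, ‖⟪v j, f⟫_ℂ‖ ^ 2 with hTdef
  have hS0 : 0 ≤ S := tsum_nonneg fun j => by positivity
  -- S = re ⟪g, f⟫
  have h2 : HasSum (fun j => ⟪v j, g⟫_ℂ * ⟪g, v j⟫_ℂ) ⟪g, f⟫_ℂ := by
    have := (hF g).mapL (innerSL ℂ g)
    rw [hFg] at this
    simpa [inner_smul_right] using this
  have hterm : ∀ j, (⟪v j, g⟫_ℂ * ⟪g, v j⟫_ℂ).re = ‖⟪v j, g⟫_ℂ‖ ^ 2 := by
    intro j
    rw [show ⟪g, v j⟫_ℂ = conj ⟪v j, g⟫_ℂ from (inner_conj_symm g (v j)).symm,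
      Complex.mul_conj]
    simp [Complex.normSq_eq_norm_sq, ← Complex.ofReal_pow]
  have h2' : HasSum (fun j => ‖⟪v j, g⟫_ℂ‖ ^ 2) (⟪g, f⟫_ℂ).re := by
    have h := h2.mapL Complex.reCLM
    simp only [Complex.reCLM_apply] at h
    simpa [hterm] using h
  have hSre : S = (⟪g, f⟫_ℂ).re := h2'.tsum_eq
  -- ‖f‖^2 as a sum
  have h1 : HasSum (fun j => ⟪v j, g⟫_ℂ * ⟪f, v j⟫_ℂ) ⟪f, f⟫_ℂ := by
    have := (hF g).mapL (innerSL ℂ f)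
    rw [hFg] at this
    simpa [inner_smul_right] using this
  have h1' : HasSum (fun j => (⟪v j, g⟫_ℂ * ⟪f, v j⟫_ℂ).re) (‖f‖ ^ 2) := by
    have h := h1.mapL Complex.reCLM
    simp only [Complex.reCLM_apply] at h
    have hn : (⟪f, f⟫_ℂ).re = ‖f‖ ^ 2 := by
      simpa using inner_self_eq_norm_sq (𝕜 := ℂ) f
    rwa [hn] at h
  -- lower bound: ‖f‖^2 ≤ (B*S + B⁻¹*T)/2
  have hptwise : ∀ j, (⟪v j, g⟫_ℂ * ⟪f, v j⟫_ℂ).re ≤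
      (B * ‖⟪v j, g⟫_ℂ‖ ^ 2 + B⁻¹ * ‖⟪v j, f⟫_ℂ‖ ^ 2) / 2 := by
    intro j
    have h3 : (⟪v j, g⟫_ℂ * ⟪f, v j⟫_ℂ).re ≤ ‖⟪v j, g⟫_ℂ‖ * ‖⟪v j, f⟫_ℂ‖ := by
      calc (⟪v j, g⟫_ℂ * ⟪f, v j⟫_ℂ).re ≤ ‖⟪v j, g⟫_ℂ * ⟪f, v j⟫_ℂ‖ := Complex.re_le_norm _
        _ = ‖⟪v j, g⟫_ℂ‖ * ‖⟪v j, f⟫_ℂ‖ := by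
            rw [norm_mul, ← inner_conj_symm (v j) f, RCLike.norm_conj]
    have h4 : 0 ≤ (B * ‖⟪v j, g⟫_ℂ‖ - ‖⟪v j, f⟫_ℂ‖) ^ 2 := sq_nonneg _
    have h5 : ‖⟪v j, g⟫_ℂ‖ * ‖⟪v j, f⟫_ℂ‖ ≤
        (B * ‖⟪v j, g⟫_ℂ‖ ^ 2 + B⁻¹ * ‖⟪v j, f⟫_ℂ‖ ^ 2) / 2 := by
      nlinarith [sq_nonneg (B * ‖⟪v j, g⟫_ℂ‖ - ‖⟪v j, f⟫_ℂ‖), hB,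
        mul_inv_cancel₀ hB.ne', inv_pos.mpr hB, mul_pos hB hB,
        norm_nonneg (⟪v j, g⟫_ℂ), norm_nonneg (⟪v j, f⟫_ℂ)]
    linarith
  have hRHS : HasSum (fun j => (B * ‖⟪v j, g⟫_ℂ‖ ^ 2 + B⁻¹ * ‖⟪v j, f⟫_ℂ‖ ^ 2) / 2)
      ((B * S + B⁻¹ * T) / 2) :=
    ((hSummg.hasSum.mul_left B).add (hSummf.hasSum.mul_left B⁻¹)).div_const 2
  have hlow : ‖f‖ ^ 2 ≤ (B * S + B⁻¹ * T) / 2 := by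
    rw [← h1'.tsum_eq, ← hRHS.tsum_eq]
    exact Summable.tsum_le_tsum hptwise h1'.summable hRHS.summable
  have hlower : B⁻¹ * ‖f‖ ^ 2 ≤ S := by
    rw [inv_mul_le_iff₀ hB]
    have : B⁻¹ * T ≤ ‖f‖ ^ 2 := by
      rw [inv_mul_le_iff₀ hB]; exact hUf
    nlinarith
  -- upper bound
  have hCS : S ≤ ‖g‖ * ‖f‖ := by rw [hSre]; simpa using re_inner_le_norm (𝕜 := ℂ) g f
  have hupper : S ≤ A⁻¹ * ‖f‖ ^ 2 := by
    rw [le_inv_mul_iff₀ hA]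
    by_cases hgz : g = 0
    · simp [hSre, hgz]
    · have hgn : 0 < ‖g‖ := norm_pos_iff.mpr hgz
      have hAg : A * ‖g‖ ≤ ‖f‖ := by
        have := hLg.trans hCS
        rw [sq] at this
        nlinarith
      nlinarith [norm_nonneg f, norm_nonneg g]
  refine ⟨by rw [hfun]; exact hSummg, ?_, ?_⟩ <;> rw [hfun] <;> [exact hlower; exact hupper]
end
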